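/- (Type B David–Barton) For every n ≥ 1 and every real x with −1 < x ≤ 1, setting w = √((1−x)/(1+x)), one has R_n^{B,>}(x) = (x/2) ((1+x)/2)^{n−1} (1+w)^n B_n((1−w)/(1+w)), where R_n^{B,>} and B_n are evaluated at the indicated real numbers. -/

import Mathlib

open Finset Polynomial

/-- The word `π_1 π_2 ⋯ π_n` of a permutation of `[n] = {1,…,n}`, as a function `ℕ → ℤ`,
with the convention that positions outside `{1,…,n}` (in particular position `0`) get value `0`. -/
def permWord (n : ℕ) (σ : Equiv.Perm (Fin n)) : ℕ → ℤ := fun i =>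
  if h : 1 ≤ i ∧ i ≤ n then ((σ ⟨i - 1, by omega⟩ : ℕ) : ℤ) + 1 else 0

/-- A word changes direction at index `i`. -/
def changesDir (w : ℕ → ℤ) (i : ℕ) : Prop :=
  (w (i - 1) < w i ∧ w (i + 1) < w i) ∨ (w i < w (i - 1) ∧ w i < w (i + 1))

instance (w : ℕ → ℤ) : DecidablePred (changesDir w) := fun i => by
  unfold changesDir; infer_instance

/-- The number of alternating runs of a permutation of `[n]`:
one plus the number of indices `i ∈ {2,…,n-1}` where the word changes direction. -/
def runA (n : ℕ) (σ : Equiv.Perm (Fin n)) : ℕ :=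
  1 + ((Finset.Icc 2 (n - 1)).filter (changesDir (permWord n σ))).card

/-- The run polynomial `R_n(x) = ∑_{σ ∈ S_n} x^{run σ}`. -/
noncomputable def runPoly (n : ℕ) : Polynomial ℤ :=
  ∑ σ : Equiv.Perm (Fin n), X ^ runA n σ

/-- `altChain w b l` holds if the values of `w` along the index list `l` alternate,
starting with a strict descent if `b = true` (resp. ascent if `b = false`). -/
def altChain (w : ℕ → ℤ) : Bool → List ℕ → Prop
  | _, [] => True
  | _, [_] => True
  | b, i :: j :: rest => (if b then w j < w i else w i < w j) ∧ altChain w (!b) (j :: rest)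

/-- `las n σ` : the maximum length of an alternating subsequence
`σ_{i₁} > σ_{i₂} < σ_{i₃} > ⋯` (indices strictly increasing) of `σ`. -/
noncomputable def las (n : ℕ) (σ : Equiv.Perm (Fin n)) : ℕ :=
  sSup {k | ∃ l : List ℕ, l.length = k ∧ l.Chain' (· < ·) ∧
    (∀ i ∈ l, 1 ≤ i ∧ i ≤ n) ∧ altChain (permWord n σ) true l}

/-- The set of peaks of a permutation: indices `i ∈ {2,…,n-1}` with `σ_{i-1} < σ_i > σ_{i+1}`. -/
def peakSet (n : ℕ) (σ : Equiv.Perm (Fin n)) : Finset ℕ :=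
  (Finset.Icc 2 (n - 1)).filter fun i =>
    permWord n σ (i - 1) < permWord n σ i ∧ permWord n σ (i + 1) < permWord n σ i

/-- The set of valleys of a permutation: indices `i ∈ {2,…,n-1}` with `σ_{i-1} > σ_i < σ_{i+1}`. -/
def valleySet (n : ℕ) (σ : Equiv.Perm (Fin n)) : Finset ℕ :=
  (Finset.Icc 2 (n - 1)).filter fun i =>
    permWord n σ i < permWord n σ (i - 1) ∧ permWord n σ i < permWord n σ (i + 1)

/-- The set of left peaks of a permutation: indices `i ∈ {1,…,n-1}` with
`σ_{i-1} < σ_i > σ_{i+1}`, with the convention `σ_0 = 0`. -/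
def leftPeakSet (n : ℕ) (σ : Equiv.Perm (Fin n)) : Finset ℕ :=
  (Finset.Icc 1 (n - 1)).filter fun i =>
    permWord n σ (i - 1) < permWord n σ i ∧ permWord n σ (i + 1) < permWord n σ i

/-- The number of descents of a permutation of `[n]`. -/
def desA (n : ℕ) (σ : Equiv.Perm (Fin n)) : ℕ :=
  ((Finset.Icc 1 (n - 1)).filter fun i => permWord n σ (i + 1) < permWord n σ i).card

/-- The maximum letter (as a natural number, `0` for the empty word) of `w₂`, the longest
suffix of `w_1 ⋯ w_{i-1}` all of whose letters exceed `w i`. -/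
def w2Max (w : ℕ → ℤ) (i : ℕ) : ℕ :=
  ((Finset.Ico 1 i).filter fun j => ∀ t ∈ Finset.Ico j i, w i < w t).sup fun j => (w j).toNat

/-- The maximum letter (as a natural number, `0` for the empty word) of `w₄`, the longest
prefix of `w_{i+1} ⋯ w_n` all of whose letters exceed `w i`. -/
def w4Max (n : ℕ) (w : ℕ → ℤ) (i : ℕ) : ℕ :=
  ((Finset.Ioc i n).filter fun j => ∀ t ∈ Finset.Ioc i j, w i < w t).sup fun j => (w j).toNat

/-- André permutation of `[n]`: no double descent, no final descent, and for every
`i ∈ {2,…,n-1}`, in the `π_i`-factorization the maximum letter of `w₂` is smaller than the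
maximum letter of `w₄` (maximum of the empty word being `0`). -/
def IsAndre (n : ℕ) (σ : Equiv.Perm (Fin n)) : Prop :=
  (∀ i ∈ Finset.Icc 2 (n - 1),
      ¬(permWord n σ i < permWord n σ (i - 1) ∧ permWord n σ (i + 1) < permWord n σ i)) ∧
  permWord n σ (n - 1) < permWord n σ n ∧
  ∀ i ∈ Finset.Icc 2 (n - 1), w2Max (permWord n σ) i < w4Max n (permWord n σ) i

/-- `d_{n,i}` : the number of André permutations of `[n]` with exactly `i` descents. -/
noncomputable def andreCount (n i : ℕ) : ℕ :=
  Nat.card {σ : Equiv.Perm (Fin n) // IsAndre n σ ∧ desA n σ = i}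

/-- A signed permutation of length `n`: a permutation of `[n]` together with a sign for
each position. -/
abbrev SignedPerm (n : ℕ) := Equiv.Perm (Fin n) × (Fin n → Bool)

/-- The word `π_1 π_2 ⋯ π_n` of a signed permutation, as a function `ℕ → ℤ`, with the
convention that positions outside `{1,…,n}` (in particular position `0`) get value `0`. -/
def signedWord (n : ℕ) (π : SignedPerm n) : ℕ → ℤ := fun i =>
  if h : 1 ≤ i ∧ i ≤ n then
    (if π.2 ⟨i - 1, by omega⟩ then -(((π.1 ⟨i - 1, by omega⟩ : ℕ) : ℤ) + 1)
      else ((π.1 ⟨i - 1, by omega⟩ : ℕ) : ℤ) + 1)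
  else 0

/-- `run_B` : one plus the number of indices `i ∈ {1,…,n-1}` where the word
`0 π_1 ⋯ π_n` changes direction. -/
def runB (n : ℕ) (π : SignedPerm n) : ℕ :=
  1 + ((Finset.Icc 1 (n - 1)).filter (changesDir (signedWord n π))).card

/-- `des_B` : the number of indices `i ∈ {0,…,n-1}` with `π_i > π_{i+1}`, where `π_0 = 0`. -/
def desB (n : ℕ) (π : SignedPerm n) : ℕ :=
  ((Finset.range n).filter fun i => signedWord n π (i + 1) < signedWord n π i).card

/-- The set of valleys of a signed permutation: indices `i ∈ {1,…,n-1}` with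
`π_{i-1} > π_i < π_{i+1}`, with the convention `π_0 = 0`. -/
def valleysB (n : ℕ) (π : SignedPerm n) : Finset ℕ :=
  (Finset.Icc 1 (n - 1)).filter fun i =>
    signedWord n π i < signedWord n π (i - 1) ∧ signedWord n π i < signedWord n π (i + 1)

/-- The maximum letter of `w₂` (as an element of `WithBot ℤ`, empty word giving `⊥ = -∞`). -/
def w2MaxB (w : ℕ → ℤ) (i : ℕ) : WithBot ℤ :=
  ((Finset.Ico 1 i).filter fun j => ∀ t ∈ Finset.Ico j i, w i < w t).sup fun j =>
    (w j : WithBot ℤ)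

/-- The maximum letter of `w₄` (as an element of `WithBot ℤ`, empty word giving `⊥ = -∞`). -/
def w4MaxB (n : ℕ) (w : ℕ → ℤ) (i : ℕ) : WithBot ℤ :=
  ((Finset.Ioc i n).filter fun j => ∀ t ∈ Finset.Ioc i j, w i < w t).sup fun j =>
    (w j : WithBot ℤ)

/-- Type B André permutation: no double descent, no final descent, and for every valley `i`,
in the `π_i`-factorization the maximum letter of `w₂` is smaller than the maximum letter of
`w₄` (maximum of the empty word being `-∞`). -/
def IsAndreB (n : ℕ) (π : SignedPerm n) : Prop :=
  (∀ i ∈ Finset.Icc 1 (n - 1),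
      ¬(signedWord n π i < signedWord n π (i - 1) ∧ signedWord n π (i + 1) < signedWord n π i)) ∧
  signedWord n π (n - 1) < signedWord n π n ∧
  ∀ i ∈ valleysB n π, w2MaxB (signedWord n π) i < w4MaxB n (signedWord n π) i

/-- The number of negative letters of a signed permutation. -/
def negCount (n : ℕ) (π : SignedPerm n) : ℕ :=
  (Finset.univ.filter fun i => π.2 i = true).card

/-- `R_n^{B,>}(x)`. -/
noncomputable def runPolyBgt (n : ℕ) : Polynomial ℤ :=
  ∑ π : SignedPerm n, if 0 < signedWord n π 1 then X ^ runB n π else 0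

/-- `R_n^{B,<}(x)`. -/
noncomputable def runPolyBlt (n : ℕ) : Polynomial ℤ :=
  ∑ π : SignedPerm n, if signedWord n π 1 < 0 then X ^ runB n π else 0

/-- `R_n^{B}(x)`. -/
noncomputable def runPolyB (n : ℕ) : Polynomial ℤ :=
  ∑ π : SignedPerm n, X ^ runB n π

/-- `R_n^{D,>}(x)`. -/
noncomputable def runPolyDgt (n : ℕ) : Polynomial ℤ :=
  ∑ π : SignedPerm n, if Even (negCount n π) ∧ 0 < signedWord n π 1 then X ^ runB n π else 0

/-- `R_n^{D,<}(x)`. -/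
noncomputable def runPolyDlt (n : ℕ) : Polynomial ℤ :=
  ∑ π : SignedPerm n, if Even (negCount n π) ∧ signedWord n π 1 < 0 then X ^ runB n π else 0

/-- `R_n^{D}(x)`. -/
noncomputable def runPolyD (n : ℕ) : Polynomial ℤ :=
  ∑ π : SignedPerm n, if Even (negCount n π) then X ^ runB n π else 0

/-- The Eulerian polynomial `A_n(x) = ∑_{σ ∈ S_n} x^{des(σ)+1}`. -/
noncomputable def eulerianA (n : ℕ) : Polynomial ℤ :=
  ∑ σ : Equiv.Perm (Fin n), X ^ (desA n σ + 1)

/-- The type B Eulerian polynomial `B_n(x) = ∑_{π ∈ 𝔅_n} x^{des_B(π)}`. -/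
noncomputable def eulerianB (n : ℕ) : Polynomial ℤ :=
  ∑ π : SignedPerm n, X ^ desB n π

/-- `b̄_{n,k}` : the number of type B André permutations of length `n` with `des_B` equal
to `k`. -/
noncomputable def andreBCountDes (n k : ℕ) : ℕ :=
  Nat.card {π : SignedPerm n // IsAndreB n π ∧ desB n π = k}

/-- `b̂_{n,j}` : the number of type B André permutations of length `n` with exactly `j`
valleys. -/
noncomputable def andreBCountVal (n j : ℕ) : ℕ :=
  Nat.card {π : SignedPerm n // IsAndreB n π ∧ (valleysB n π).card = j}

/-- `d̃_{n,k}` : the number of type D André permutations of length `n` (type B André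
permutations with an even number of negative letters) with exactly `k` valleys. -/
noncomputable def andreDCountVal (n k : ℕ) : ℕ :=
  Nat.card {π : SignedPerm n //
    IsAndreB n π ∧ Even (negCount n π) ∧ (valleysB n π).card = k}

/-- The number of permutations of `[n]` with exactly `j` left peaks. -/
noncomputable def leftPeakCount (n j : ℕ) : ℕ :=
  Nat.card {σ : Equiv.Perm (Fin n) // (leftPeakSet n σ).card = j}

/-- `R_n` evaluated at a real number. -/
noncomputable def runPolyReal (n : ℕ) (x : ℝ) : ℝ :=
  ∑ σ : Equiv.Perm (Fin n), x ^ runA n σ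

/-- `A_n` evaluated at a real number. -/
noncomputable def eulerianAReal (n : ℕ) (x : ℝ) : ℝ :=
  ∑ σ : Equiv.Perm (Fin n), x ^ (desA n σ + 1)

/-- `R_n^{B,>}` evaluated at a real number. -/
noncomputable def runPolyBgtReal (n : ℕ) (x : ℝ) : ℝ :=
  ∑ π : SignedPerm n, if 0 < signedWord n π 1 then x ^ runB n π else 0

/-- `B_n` evaluated at a real number. -/
noncomputable def eulerianBReal (n : ℕ) (x : ℝ) : ℝ :=
  ∑ π : SignedPerm n, x ^ desB n π

/-! ### Auxiliary development for statement16 -/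

namespace DB16

open Finset Function

section Basics

variable {n : ℕ} (σ : Equiv.Perm (Fin n))

/-- Absolute word. -/
lemma permWord_zero : permWord n σ 0 = 0 := by simp [permWord]

lemma permWord_pos {i : ℕ} (h1 : 1 ≤ i) (h2 : i ≤ n) : 1 ≤ permWord n σ i := by
  unfold permWord
  rw [dif_pos ⟨h1, h2⟩]
  have h0 : (0:ℤ) ≤ ((σ ⟨i - 1, by omega⟩ : Fin n) : ℕ) := Int.natCast_nonneg _
  linarith

lemma permWord_ne {i j : ℕ} (h1 : 1 ≤ i) (h2 : i ≤ n) (h3 : 1 ≤ j) (h4 : j ≤ n)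
    (hij : i ≠ j) : permWord n σ i ≠ permWord n σ j := by
  unfold permWord
  rw [dif_pos ⟨h1, h2⟩, dif_pos ⟨h3, h4⟩]
  intro hc
  have : (σ ⟨i - 1, by omega⟩ : ℕ) = (σ ⟨j - 1, by omega⟩ : ℕ) := by exact_mod_cast by linarith
  have h5 : (⟨i - 1, by omega⟩ : Fin n) = ⟨j - 1, by omega⟩ := by
    apply σ.injective
    exact Fin.val_injective this
  apply hij
  have := Fin.mk.injEq (i-1) (by omega : i - 1 < n) (j-1) (by omega) ▸ h5
  omega

lemma signedWord_eq (f : Fin n → Bool) {i : ℕ} (h1 : 1 ≤ i) (h2 : i ≤ n) :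
    signedWord n (σ, f) i =
      if f ⟨i - 1, by omega⟩ then -(permWord n σ i) else permWord n σ i := by
  unfold signedWord permWord
  rw [dif_pos ⟨h1, h2⟩, dif_pos ⟨h1, h2⟩]

lemma signedWord_zero (f : Fin n → Bool) : signedWord n (σ, f) 0 = 0 := by
  simp [signedWord]

lemma signedWord_abs (f : Fin n → Bool) {i : ℕ} (h1 : 1 ≤ i) (h2 : i ≤ n) :
    signedWord n (σ, f) i = permWord n σ i ∨ signedWord n (σ, f) i = -(permWord n σ i) := by
  rw [signedWord_eq σ f h1 h2]
  by_cases h : f ⟨i - 1, by omega⟩ <;> simp [h]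

lemma signedWord_ne (f : Fin n → Bool) {i j : ℕ} (h1 : 1 ≤ i) (h2 : i ≤ n) (h3 : 1 ≤ j)
    (h4 : j ≤ n) (hij : i ≠ j) : signedWord n (σ, f) i ≠ signedWord n (σ, f) j := by
  have hi := permWord_pos σ h1 h2
  have hj := permWord_pos σ h3 h4
  have hne := permWord_ne σ h1 h2 h3 h4 hij
  rcases signedWord_abs σ f h1 h2 with hi' | hi' <;>
    rcases signedWord_abs σ f h3 h4 with hj' | hj' <;> rw [hi', hj'] <;> omega

lemma signedWord_ne_zero (f : Fin n → Bool) {i : ℕ} (h1 : 1 ≤ i) (h2 : i ≤ n) :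
    signedWord n (σ, f) i ≠ 0 := by
  have hi := permWord_pos σ h1 h2
  rcases signedWord_abs σ f h1 h2 with hi' | hi' <;> rw [hi'] <;> omega

/-- The signed word only depends on the sign at the matching coordinate. -/
lemma signedWord_update (f : Fin n → Bool) (k : Fin n) (b : Bool) {i : ℕ} (hik : i ≠ (k : ℕ) + 1) :
    signedWord n (σ, Function.update f k b) i = signedWord n (σ, f) i := by
  unfold signedWord
  by_cases h : 1 ≤ i ∧ i ≤ n
  · rw [dif_pos h, dif_pos h]
    have hne : (⟨i - 1, by omega⟩ : Fin n) ≠ k := by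
      intro hc
      apply hik
      have : i - 1 = (k : ℕ) := congrArg Fin.val hc
      omega
    dsimp only
    simp only [Function.update_of_ne hne]
  · rw [dif_neg h, dif_neg h]

end Basics

section Halving

variable {n : ℕ}

lemma sum_flip (k : Fin n) (G : (Fin n → Bool) → ℝ)
    (hG : ∀ f b, G (Function.update f k b) = G f) (c : Bool) :
    ∑ f : Fin n → Bool, (if f k = c then G f else 0)
      = ∑ f : Fin n → Bool, (if f k = !c then G f else 0) := by
  rw [← Finset.sum_filter, ← Finset.sum_filter]
  apply Finset.sum_nbij' (i := fun f => Function.update f k (!c))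
    (j := fun f => Function.update f k c)
  · intro a ha
    simp only [Finset.mem_filter, Finset.mem_univ, true_and]
    simp [Function.update_self]
  · intro a ha
    simp only [Finset.mem_filter, Finset.mem_univ, true_and]
    simp [Function.update_self]
  · intro a ha
    simp only [Finset.mem_filter, Finset.mem_univ, true_and] at ha
    simp [Function.update_idem, ← ha, Function.update_eq_self]
  · intro a ha
    simp only [Finset.mem_filter, Finset.mem_univ, true_and] at ha
    have : a k = !c := by cases c <;> cases hak : a k <;> simp_all
    simp [Function.update_idem, ← this, Function.update_eq_self]
  · intro a ha
    exact (hG a (!c)).symm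

lemma half_sum (k : Fin n) (G : (Fin n → Bool) → ℝ)
    (hG : ∀ f b, G (Function.update f k b) = G f) (c : Bool) :
    ∑ f : Fin n → Bool, (if f k = c then G f else 0) = 1/2 * ∑ f : Fin n → Bool, G f := by
  have hsplit : ∑ f : Fin n → Bool, G f
      = (∑ f : Fin n → Bool, if f k = c then G f else 0)
        + ∑ f : Fin n → Bool, (if f k = !c then G f else 0) := by
    rw [← Finset.sum_add_distrib]
    apply Finset.sum_congr rfl
    intro f _
    by_cases h : f k = c
    · rw [if_pos h, if_neg (by simp [h]), add_zero]
    · rw [if_neg h, if_pos (by cases hfk : f k <;> cases c <;> simp_all), zero_add]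
  rw [← sum_flip k G hG c] at hsplit
  linarith

end Halving

end DB16

namespace DB16

open Finset Function

section Dside

variable {n : ℕ}

/-- Signed value of position `i` in sign-class `ε`. -/
@[reducible] def wv (σ : Equiv.Perm (Fin n)) (ε : Bool) (i : ℕ) : ℤ :=
  if ε then -(permWord n σ i) else permWord n σ i

lemma signedWord_eq_wv (σ : Equiv.Perm (Fin n)) (f : Fin n → Bool) {i : ℕ}
    (h1 : 1 ≤ i) (h2 : i ≤ n) :
    signedWord n (σ, f) i = wv σ (f ⟨i - 1, by omega⟩) i := by
  rw [signedWord_eq σ f h1 h2, wv]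

lemma signedWord_class (σ : Equiv.Perm (Fin n)) (f : Fin n → Bool) {i : ℕ}
    (h1 : 1 ≤ i) (h2 : i ≤ n) :
    decide (signedWord n (σ, f) i < 0) = f ⟨i - 1, by omega⟩ := by
  have hA := permWord_pos σ h1 h2
  rw [signedWord_eq σ f h1 h2]
  by_cases h : f ⟨i - 1, by omega⟩ = true
  · rw [if_pos h, h, decide_eq_true_eq]
    omega
  · rw [if_neg h, Bool.not_eq_true] at *
    rw [h, decide_eq_false_iff_not]
    omega

lemma signedWord_of_class (σ : Equiv.Perm (Fin n)) (f : Fin n → Bool) {i : ℕ}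
    (h1 : 1 ≤ i) (h2 : i ≤ n) {ε : Bool}
    (h : decide (signedWord n (σ, f) i < 0) = ε) :
    signedWord n (σ, f) i = wv σ ε i := by
  rw [signedWord_class σ f h1 h2] at h
  rw [signedWord_eq_wv σ f h1 h2, h]

/-- Partial descent count. -/
def Dp (σ : Equiv.Perm (Fin n)) (p : ℕ) (f : Fin n → Bool) : ℕ :=
  ((Finset.range p).filter
    (fun i => signedWord n (σ, f) (i + 1) < signedWord n (σ, f) i)).card

lemma Dp_n_eq (σ : Equiv.Perm (Fin n)) (f : Fin n → Bool) : Dp σ n f = desB n (σ, f) := rfl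

lemma Dp_succ (σ : Equiv.Perm (Fin n)) (p : ℕ) (f : Fin n → Bool) :
    Dp σ (p + 1) f = Dp σ p f
      + (if signedWord n (σ, f) (p + 1) < signedWord n (σ, f) p then 1 else 0) := by
  unfold Dp
  rw [Finset.range_add_one, Finset.filter_insert]
  by_cases h : signedWord n (σ, f) (p + 1) < signedWord n (σ, f) p
  · rw [if_pos h, if_pos h, Finset.card_insert_of_notMem (by simp)]
  · rw [if_neg h, if_neg h, add_zero]

lemma Dp_update (σ : Equiv.Perm (Fin n)) (p : ℕ) (f : Fin n → Bool) (k : Fin n) (b : Bool)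
    (hk : p ≤ (k : ℕ)) : Dp σ p (Function.update f k b) = Dp σ p f := by
  unfold Dp
  congr 1
  apply Finset.filter_congr
  intro i hi
  rw [Finset.mem_range] at hi
  rw [signedWord_update σ f k b (show i + 1 ≠ (k : ℕ) + 1 by omega),
    signedWord_update σ f k b (show i ≠ (k : ℕ) + 1 by omega)]

/-- Partial descent-side state sums. -/
noncomputable def Sd (σ : Equiv.Perm (Fin n)) (t : ℝ) (p : ℕ) (ε : Bool) : ℝ :=
  ∑ f : Fin n → Bool,
    if decide (signedWord n (σ, f) p < 0) = ε then t ^ Dp σ p f else 0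

lemma ite_and_zero {A B : Prop} [Decidable A] [Decidable B] (v : ℝ) :
    (if A ∧ B then v else 0) = if B then (if A then v else 0) else 0 := by
  by_cases hA : A <;> by_cases hB : B <;> simp [hA, hB]

lemma Sd_step (σ : Equiv.Perm (Fin n)) (t : ℝ) {p : ℕ} (hp : 1 ≤ p) (hpn : p + 1 ≤ n)
    (ε' : Bool) :
    Sd σ t (p + 1) ε'
      = 1/2 * ((t ^ (if wv σ ε' (p+1) < wv σ false p then 1 else 0)) * Sd σ t p false
        + (t ^ (if wv σ ε' (p+1) < wv σ true p then 1 else 0)) * Sd σ t p true) := by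
  have hkp : p < n := by omega
  set k : Fin n := ⟨p, hkp⟩ with hk
  have hkval : (k : ℕ) = p := by rw [hk]
  -- pointwise split of the summand
  have hsplit : ∀ f : Fin n → Bool,
      (if decide (signedWord n (σ, f) (p+1) < 0) = ε' then t ^ Dp σ (p+1) f else 0)
      = (t ^ (if wv σ ε' (p+1) < wv σ false p then 1 else 0)) *
          (if f k = ε' then (if decide (signedWord n (σ, f) p < 0) = false
            then t ^ Dp σ p f else 0) else 0)
        + (t ^ (if wv σ ε' (p+1) < wv σ true p then 1 else 0)) *
          (if f k = ε' then (if decide (signedWord n (σ, f) p < 0) = true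
            then t ^ Dp σ p f else 0) else 0) := by
    intro f
    have hc1 : decide (signedWord n (σ, f) (p+1) < 0) = f k :=
      signedWord_class σ f (by omega) hpn
    rw [hc1]
    by_cases hfk : f k = ε'
    · rw [if_pos hfk, if_pos hfk, if_pos hfk]
      have hwp1 : signedWord n (σ, f) (p+1) = wv σ ε' (p+1) := by
        rw [signedWord_eq_wv σ f (by omega) hpn]
        exact congrArg (fun b => wv σ b (p+1)) hfk
      cases hcl : decide (signedWord n (σ, f) p < 0) with
      | false =>
          have hwp : signedWord n (σ, f) p = wv σ false p :=
            signedWord_of_class σ f hp (by omega) hcl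
          rw [if_pos rfl, if_neg Bool.false_ne_true, mul_zero, add_zero,
            Dp_succ, pow_add, hwp, hwp1, mul_comm]
      | true =>
          have hwp : signedWord n (σ, f) p = wv σ true p :=
            signedWord_of_class σ f hp (by omega) hcl
          rw [if_neg (show ¬((true:Bool) = false) from by simp), if_pos rfl, mul_zero,
            zero_add, Dp_succ, pow_add, hwp, hwp1, mul_comm]
    · rw [if_neg hfk, if_neg hfk, if_neg hfk, mul_zero, mul_zero, add_zero]
  have hhf := half_sum k
    (fun f => if decide (signedWord n (σ, f) p < 0) = false then t ^ Dp σ p f else 0)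
    (fun f b => by
      have h1 := Dp_update σ p f k b (le_of_eq hkval.symm)
      have h2 := signedWord_update σ f k b (i := p) (by omega)
      simp only [h1, h2]) ε'
  have hht := half_sum k
    (fun f => if decide (signedWord n (σ, f) p < 0) = true then t ^ Dp σ p f else 0)
    (fun f b => by
      have h1 := Dp_update σ p f k b (le_of_eq hkval.symm)
      have h2 := signedWord_update σ f k b (i := p) (by omega)
      simp only [h1, h2]) ε'
  unfold Sd
  rw [Finset.sum_congr rfl (fun f _ => hsplit f), Finset.sum_add_distrib,
    ← Finset.mul_sum, ← Finset.mul_sum]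
  rw [hhf, hht]
  ring

end Dside

end DB16

namespace DB16

open Finset Function

section DInduction

variable {n : ℕ}

/-- Context bit: 1 if the gap into position `p` is a descent of the absolute word. -/
def bt (σ : Equiv.Perm (Fin n)) (p : ℕ) : ℕ :=
  if permWord n σ p < permWord n σ (p - 1) then 1 else 0

/-- Number of left peaks among gaps `1 … p-1` of the absolute word. -/
def lpks (σ : Equiv.Perm (Fin n)) (p : ℕ) : ℕ :=
  ((Finset.Icc 1 (p - 1)).filter (fun i => permWord n σ (i - 1) < permWord n σ i ∧
    permWord n σ (i + 1) < permWord n σ i)).card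

lemma lpks_n (σ : Equiv.Perm (Fin n)) : lpks σ n = (leftPeakSet n σ).card := rfl

lemma wv_false (σ : Equiv.Perm (Fin n)) (i : ℕ) : wv σ false i = permWord n σ i := rfl

lemma wv_true (σ : Equiv.Perm (Fin n)) (i : ℕ) : wv σ true i = -permWord n σ i := rfl

lemma bt_zero_or_one (σ : Equiv.Perm (Fin n)) (p : ℕ) : bt σ p = 0 ∨ bt σ p = 1 := by
  unfold bt; split <;> simp

lemma bt_one (σ : Equiv.Perm (Fin n)) (hn : 1 ≤ n) : bt σ 1 = 0 := by
  have h0 := permWord_zero σ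
  have h1 := permWord_pos σ (le_refl 1) hn
  unfold bt
  rw [if_neg (by simp only [Nat.sub_self]; omega)]

lemma bt_zero_iff (σ : Equiv.Perm (Fin n)) {p : ℕ} (hp : 1 ≤ p) (hpn : p ≤ n) :
    bt σ p = 0 ↔ permWord n σ (p - 1) < permWord n σ p := by
  have hApos := permWord_pos σ hp hpn
  rcases Nat.eq_or_lt_of_le hp with h1 | h2
  · have h0 : p - 1 = 0 := by omega
    rw [h0, permWord_zero σ]
    unfold bt
    rw [h0, permWord_zero σ, if_neg (by omega)]
    simp only [eq_self_iff_true, true_iff]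
    omega
  · have hne := permWord_ne σ (show 1 ≤ p - 1 by omega) (show p - 1 ≤ n by omega)
      hp hpn (by omega)
    unfold bt
    by_cases h : permWord n σ p < permWord n σ (p - 1)
    · rw [if_pos h]; constructor
      · intro hc; omega
      · intro hc; omega
    · rw [if_neg h]; constructor
      · intro _; omega
      · intro _; rfl

lemma lpks_one (σ : Equiv.Perm (Fin n)) : lpks σ 1 = 0 := by
  unfold lpks
  rw [show (1:ℕ) - 1 = 0 from rfl, Finset.Icc_eq_empty (by omega), Finset.filter_empty,
    Finset.card_empty]

lemma lpks_succ (σ : Equiv.Perm (Fin n)) {p : ℕ} (hp : 1 ≤ p) :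
    lpks σ (p + 1) = lpks σ p +
      (if permWord n σ (p - 1) < permWord n σ p ∧ permWord n σ (p + 1) < permWord n σ p
        then 1 else 0) := by
  unfold lpks
  have h1 : p + 1 - 1 = (p - 1) + 1 := by omega
  rw [h1, ← Finset.insert_Icc_right_eq_Icc_add_one (by omega), Finset.filter_insert]
  have h2 : p - 1 + 1 = p := by omega
  rw [h2]
  by_cases h : permWord n σ (p - 1) < permWord n σ p ∧ permWord n σ (p + 1) < permWord n σ p
  · rw [if_pos h, if_pos h, Finset.card_insert_of_notMem (by
      intro hc
      rw [Finset.mem_filter, Finset.mem_Icc] at hc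
      omega)]
  · rw [if_neg h, if_neg h, add_zero]

/-- The key invariant induction for the descent side. -/
lemma claimD (σ : Equiv.Perm (Fin n)) (t : ℝ) :
    ∀ p, 1 ≤ p → p ≤ n →
      bt σ p ≤ 2 * lpks σ p ∧ 2 * lpks σ p + 1 ≤ p + bt σ p ∧
      Sd σ t p false = 2 ^ (n - p) * (t ^ lpks σ p * 2 ^ (2 * lpks σ p - bt σ p)
        * (1 + t) ^ (p - 1 + bt σ p - 2 * lpks σ p)) ∧
      Sd σ t p true = (if bt σ p = 1 then Sd σ t p false else t * Sd σ t p false) := by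
  intro p
  induction p with
  | zero => omega
  | succ q ih =>
    intro hq1 hqn
    rcases Nat.eq_or_lt_of_le hq1 with hbase | hstep
    · -- base case p = 1
      have hq0 : q = 0 := by omega
      subst hq0
      simp only [Nat.zero_add]
      have hn1 : 1 ≤ n := hqn
      have hk0 : (0:ℕ) < n := hn1
      set k : Fin n := ⟨0, hk0⟩ with hk
      have hA1 := permWord_pos σ (le_refl 1) hn1
      -- pointwise values
      have hpt : ∀ (f : Fin n → Bool) (ε : Bool),
          (if decide (signedWord n (σ, f) 1 < 0) = ε then t ^ Dp σ 1 f else 0)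
            = (if f k = ε then (if ε then t else 1) else 0) := by
        intro f ε
        rw [signedWord_class σ f (le_refl 1) hn1]
        by_cases h : f k = ε
        · rw [if_pos h, if_pos h]
          have hwv : signedWord n (σ, f) 1 = wv σ ε 1 := by
            rw [signedWord_eq_wv σ f (le_refl 1) hn1]
            exact congrArg (fun b => wv σ b 1) h
          have hD : Dp σ 1 f = if ε then 1 else 0 := by
            unfold Dp
            rw [show Finset.range 1 = {0} from rfl, Finset.filter_singleton]
            simp only [Nat.zero_add, signedWord_zero, hwv]
            cases ε
            · simp only [wv_false]
              rw [if_neg (by omega), Finset.card_empty]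
              simp
            · simp only [wv_true]
              rw [if_pos (by omega), Finset.card_singleton]
              simp
          rw [hD]
          cases ε
          · rw [if_neg (by simp), pow_zero, if_neg (by simp)]
          · rw [if_pos rfl, pow_one, if_pos rfl]
        · rw [if_neg h, if_neg h]
      have hsum : ∀ ε : Bool, Sd σ t 1 ε = 2 ^ (n - 1) * (if ε then t else 1) := by
        intro ε
        unfold Sd
        rw [Finset.sum_congr rfl (fun f _ => hpt f ε)]
        rw [half_sum k (fun _ => (if ε then t else 1)) (fun _ _ => rfl) ε]
        rw [Finset.sum_const, Finset.card_univ]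
        simp only [Fintype.card_fun, Fintype.card_bool, Fintype.card_fin, nsmul_eq_mul]
        push_cast
        have h2 : (2:ℝ) ^ n = 2 ^ (n - 1) * 2 := by
          rw [← pow_succ]; congr 1; omega
        rw [h2]; ring
      have hbt := bt_one σ hn1
      have hlp := lpks_one σ
      refine ⟨by omega, by omega, ?_, ?_⟩
      · rw [hsum false, hbt, hlp]
        norm_num
      · rw [hsum true, hsum false, hbt]
        norm_num [mul_comm]
    · -- inductive step: q ≥ 1, p = q + 1
      have hq1' : 1 ≤ q := by omega
      have hqn' : q ≤ n := by omega
      obtain ⟨ihb, ihp, ihf, iht⟩ := ih hq1' hqn'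
      have hbtq1 : bt σ q ≤ 1 := by rcases bt_zero_or_one σ q with h | h <;> omega
      have hstepf := Sd_step σ t hq1' hqn false
      have hstept := Sd_step σ t hq1' hqn true
      have hAq := permWord_pos σ hq1' hqn'
      have hAq1 := permWord_pos σ (show 1 ≤ q + 1 by omega) hqn
      have hAne := permWord_ne σ hq1' hqn' (show 1 ≤ q + 1 by omega) hqn (by omega)
      simp only [wv_false, wv_true] at hstepf hstept
      -- the (false → true transition) exponent is always 1, (true → false) always 0
      rw [if_neg (show ¬(permWord n σ (q+1) < -(permWord n σ q)) by omega), pow_zero]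
        at hstepf
      rw [if_pos (show -(permWord n σ (q+1)) < permWord n σ q by omega), pow_one]
        at hstept
      have hlps := lpks_succ σ hq1'
      have hbq10 : permWord n σ (q+1-1) = permWord n σ q := by norm_num
      rcases lt_or_gt_of_ne hAne with hlt | hgt
      · -- ascent: bt (q+1) = 0
        have hbt1 : bt σ (q + 1) = 0 := by
          unfold bt; rw [hbq10, if_neg (by omega)]
        rw [if_neg (show ¬(permWord n σ (q+1) < permWord n σ q) by omega), pow_zero]
          at hstepf
        rw [if_pos (show -(permWord n σ (q+1)) < -(permWord n σ q) by omega), pow_one]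
          at hstept
        have hJ : lpks σ (q+1) = lpks σ q := by
          rw [hlps, if_neg (by omega), add_zero]
        have hT : Sd σ t (q+1) true = t * Sd σ t (q+1) false := by
          rw [hstepf, hstept]; ring
        refine ⟨by omega, by omega, ?_, by rw [hbt1]; norm_num [hT]⟩
        rcases bt_zero_or_one σ q with hb0 | hb1
        · -- previous ascent: St = t * Sf
          rw [hb0] at ihf iht ihp ihb
          rw [if_neg (by omega)] at iht
          rw [hstepf, iht, ihf, hJ, hbt1]
          have e1 : n - q = (n - (q + 1)) + 1 := by omega
          have e2 : q - 1 + 0 - 2 * lpks σ q + 1 = q + 1 - 1 + 0 - 2 * lpks σ q := by omega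
          rw [e1, pow_succ, ← e2, pow_succ]
          ring
        · -- previous descent: St = Sf
          rw [hb1] at ihf iht ihp ihb
          rw [if_pos rfl] at iht
          rw [hstepf, iht, ihf, hJ, hbt1]
          have e1 : n - q = (n - (q + 1)) + 1 := by omega
          have e2 : 2 * lpks σ q - 0 = (2 * lpks σ q - 1) + 1 := by omega
          have e3 : q - 1 + 1 - 2 * lpks σ q = q + 1 - 1 + 0 - 2 * lpks σ q := by omega
          rw [e1, pow_succ, e2, pow_succ, e3]
          ring
      · -- descent: bt (q+1) = 1
        have hbt1 : bt σ (q + 1) = 1 := by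
          unfold bt; rw [hbq10, if_pos (by omega)]
        rw [if_pos (show permWord n σ (q+1) < permWord n σ q by omega), pow_one] at hstepf
        rw [if_neg (show ¬(-(permWord n σ (q+1)) < -(permWord n σ q)) by omega), pow_zero]
          at hstept
        have hT : Sd σ t (q+1) true = Sd σ t (q+1) false := by
          rw [hstepf, hstept]
        refine ⟨?_, ?_, ?_, by rw [hbt1, if_pos rfl, hT]⟩
        case _ =>
          rcases bt_zero_or_one σ q with hb0 | hb1
          · have hJ : lpks σ (q+1) = lpks σ q + 1 := by
              rw [hlps, if_pos ⟨(bt_zero_iff σ hq1' hqn').mp hb0, by omega⟩]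
            omega
          · have hJ : lpks σ (q+1) = lpks σ q := by
              rw [hlps, if_neg (by
                intro hc
                have := (bt_zero_iff σ hq1' hqn').mpr hc.1
                omega), add_zero]
            rw [hb1] at ihb; omega
        case _ =>
          rcases bt_zero_or_one σ q with hb0 | hb1
          · have hJ : lpks σ (q+1) = lpks σ q + 1 := by
              rw [hlps, if_pos ⟨(bt_zero_iff σ hq1' hqn').mp hb0, by omega⟩]
            rw [hb0] at ihp; omega
          · have hJ : lpks σ (q+1) = lpks σ q := by
              rw [hlps, if_neg (by
                intro hc
                have := (bt_zero_iff σ hq1' hqn').mpr hc.1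
                omega), add_zero]
            rw [hb1] at ihp; omega
        case _ =>
          rcases bt_zero_or_one σ q with hb0 | hb1
          · -- peak at q
            have hJ : lpks σ (q+1) = lpks σ q + 1 := by
              rw [hlps, if_pos ⟨(bt_zero_iff σ hq1' hqn').mp hb0, by omega⟩]
            rw [hb0] at ihf iht ihp ihb
            rw [if_neg (by omega)] at iht
            rw [hstepf, iht, ihf, hJ, hbt1]
            have e1 : n - q = (n - (q + 1)) + 1 := by omega
            have e2 : 2 * (lpks σ q + 1) - 1 = (2 * lpks σ q - 0) + 1 := by omega
            have e3 : q - 1 + 0 - 2 * lpks σ q = q + 1 - 1 + 1 - 2 * (lpks σ q + 1) := by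
              omega
            rw [e1, pow_succ, e2, pow_succ, ← e3, pow_succ]
            ring
          · have hJ : lpks σ (q+1) = lpks σ q := by
              rw [hlps, if_neg (by
                intro hc
                have := (bt_zero_iff σ hq1' hqn').mpr hc.1
                omega), add_zero]
            rw [hb1] at ihf iht ihp ihb
            rw [if_pos rfl] at iht
            rw [hstepf, iht, ihf, hJ, hbt1]
            have e1 : n - q = (n - (q + 1)) + 1 := by omega
            have e3 : q - 1 + 1 - 2 * lpks σ q + 1 = q + 1 - 1 + 1 - 2 * lpks σ q := by
              omega
            rw [e1, pow_succ, ← e3, pow_succ]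
            ring

end DInduction

end DB16

namespace DB16

open Finset Function

section DFinal

variable {n : ℕ}

lemma fiberD (hn : 1 ≤ n) (σ : Equiv.Perm (Fin n)) (t : ℝ) :
    ∑ f : Fin n → Bool, t ^ desB n (σ, f)
      = 4 ^ (leftPeakSet n σ).card * t ^ (leftPeakSet n σ).card
        * (1 + t) ^ (n - 2 * (leftPeakSet n σ).card) := by
  obtain ⟨hb2J, hJp, hSf, hSt⟩ := claimD σ t n hn (le_refl n)
  have htot : (∑ f : Fin n → Bool, t ^ desB n (σ, f)) = Sd σ t n false + Sd σ t n true := by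
    unfold Sd
    rw [← Finset.sum_add_distrib]
    apply Finset.sum_congr rfl
    intro f _
    rw [← Dp_n_eq]
    cases h : decide (signedWord n (σ, f) n < 0) <;> simp
  rw [htot, hSt, ← lpks_n]
  rcases bt_zero_or_one σ n with hb | hb
  · rw [hb] at hSf hJp ⊢
    rw [if_neg (by omega), hSf]
    simp only [Nat.sub_self, pow_zero, one_mul, Nat.add_zero, Nat.sub_zero]
    have e1 : (2:ℝ) ^ (2 * lpks σ n) = 4 ^ lpks σ n := by
      rw [pow_mul]; norm_num
    have e2 : n - 2 * lpks σ n = (n - 1 - 2 * lpks σ n) + 1 := by omega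
    rw [e1, e2, pow_succ]
    ring
  · rw [hb] at hSf hJp hb2J ⊢
    rw [if_pos rfl, hSf]
    simp only [Nat.sub_self, pow_zero, one_mul]
    have e1 : (2:ℝ) ^ (2 * lpks σ n - 1) * 2 = 4 ^ lpks σ n := by
      rw [← pow_succ, show 2 * lpks σ n - 1 + 1 = 2 * lpks σ n by omega, pow_mul]
      norm_num
    have e2 : n - 1 + 1 - 2 * lpks σ n = n - 2 * lpks σ n := by omega
    rw [e2, ← e1]
    ring

lemma lpk_le (hn : 1 ≤ n) (σ : Equiv.Perm (Fin n)) :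
    2 * (leftPeakSet n σ).card ≤ n ∧ (leftPeakSet n σ).card ≤ n - 1 := by
  obtain ⟨hb2J, hJp, _, _⟩ := claimD σ (0:ℝ) n hn (le_refl n)
  rw [← lpks_n]
  rcases bt_zero_or_one σ n with hb | hb <;> rw [hb] at hJp <;> omega

end DFinal

end DB16

namespace DB16

open Finset Function

section Rside

variable {n : ℕ}

/-- Partial count of direction changes among gaps `1 … p-1`. -/
def Ch (σ : Equiv.Perm (Fin n)) (p : ℕ) (f : Fin n → Bool) : ℕ :=
  ((Finset.Icc 1 (p - 1)).filter (changesDir (signedWord n (σ, f)))).card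

lemma Ch_n (σ : Equiv.Perm (Fin n)) (f : Fin n → Bool) :
    1 + Ch σ n f = runB n (σ, f) := rfl

lemma Ch_succ (σ : Equiv.Perm (Fin n)) (f : Fin n → Bool) {p : ℕ} (hp : 1 ≤ p) :
    Ch σ (p + 1) f = Ch σ p f
      + (if changesDir (signedWord n (σ, f)) p then 1 else 0) := by
  unfold Ch
  have h1 : p + 1 - 1 = (p - 1) + 1 := by omega
  rw [h1, ← Finset.insert_Icc_right_eq_Icc_add_one (by omega), Finset.filter_insert]
  have h2 : p - 1 + 1 = p := by omega
  rw [h2]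
  by_cases h : changesDir (signedWord n (σ, f)) p
  · rw [if_pos h, if_pos h, Finset.card_insert_of_notMem (by
      intro hc
      rw [Finset.mem_filter, Finset.mem_Icc] at hc
      omega)]
  · rw [if_neg h, if_neg h, add_zero]

lemma Ch_one (σ : Equiv.Perm (Fin n)) (f : Fin n → Bool) : Ch σ 1 f = 0 := by
  unfold Ch
  rw [show (1:ℕ) - 1 = 0 from rfl, Finset.Icc_eq_empty (by omega), Finset.filter_empty,
    Finset.card_empty]

lemma Ch_update (σ : Equiv.Perm (Fin n)) (p : ℕ) (f : Fin n → Bool) (k : Fin n) (b : Bool)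
    (hk : p ≤ (k : ℕ)) : Ch σ p (Function.update f k b) = Ch σ p f := by
  unfold Ch
  congr 1
  apply Finset.filter_congr
  intro i hi
  rw [Finset.mem_Icc] at hi
  unfold changesDir
  rw [signedWord_update σ f k b (show i - 1 ≠ (k : ℕ) + 1 by omega),
    signedWord_update σ f k b (show i ≠ (k : ℕ) + 1 by omega),
    signedWord_update σ f k b (show i + 1 ≠ (k : ℕ) + 1 by omega)]

lemma word_ne_pred (σ : Equiv.Perm (Fin n)) (f : Fin n → Bool) {p : ℕ} (hp : 1 ≤ p)
    (hpn : p ≤ n) : signedWord n (σ, f) (p - 1) ≠ signedWord n (σ, f) p := by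
  rcases Nat.eq_or_lt_of_le hp with h1 | h2
  · rw [show p - 1 = 0 by omega, signedWord_zero]
    exact (signedWord_ne_zero σ f hp hpn).symm
  · exact signedWord_ne σ f (by omega) (by omega) hp hpn (by omega)

lemma change_count (σ : Equiv.Perm (Fin n)) (f : Fin n → Bool) {p : ℕ} (hp : 1 ≤ p)
    (hpn : p + 1 ≤ n) :
    (if changesDir (signedWord n (σ, f)) p then 1 else 0)
      = if (decide (signedWord n (σ, f) (p - 1) < signedWord n (σ, f) p)
          = decide (signedWord n (σ, f) p < signedWord n (σ, f) (p + 1))) then (0:ℕ) else 1 := by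
  have hne1 := word_ne_pred σ f hp (by omega)
  have hne2 := signedWord_ne σ f hp (by omega) (show 1 ≤ p + 1 by omega) hpn (by omega)
  by_cases h1 : signedWord n (σ, f) (p - 1) < signedWord n (σ, f) p <;>
    by_cases h2 : signedWord n (σ, f) p < signedWord n (σ, f) (p + 1)
  · rw [if_neg (by unfold changesDir; omega)]; simp [h1, h2]
  · rw [if_pos (by unfold changesDir; omega)]; simp [h1, h2]
  · rw [if_pos (by unfold changesDir; omega)]; simp [h1, h2]
  · rw [if_neg (by unfold changesDir; omega)]; simp [h1, h2]

lemma signedWord_pos_iff (σ : Equiv.Perm (Fin n)) (f : Fin n → Bool) {i : ℕ}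
    (h1 : 1 ≤ i) (h2 : i ≤ n) :
    (0 < signedWord n (σ, f) i) ↔ f ⟨i - 1, by omega⟩ = false := by
  have hA := permWord_pos σ h1 h2
  rw [signedWord_eq σ f h1 h2]
  by_cases h : f ⟨i - 1, by omega⟩ = true
  · rw [if_pos h]
    constructor
    · intro hc; omega
    · intro hc; rw [h] at hc; exact absurd hc (by simp)
  · rw [if_neg h]
    constructor
    · intro _; exact Bool.not_eq_true _ ▸ (by cases hfv : f ⟨i - 1, by omega⟩ <;> simp_all)
    · intro _; omega

/-- Run-side state sums. -/
noncomputable def Sr (σ : Equiv.Perm (Fin n)) (x : ℝ) (p : ℕ) (ε δ : Bool) : ℝ :=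
  ∑ f : Fin n → Bool,
    if (0 < signedWord n (σ, f) 1 ∧ decide (signedWord n (σ, f) p < 0) = ε
        ∧ decide (signedWord n (σ, f) (p - 1) < signedWord n (σ, f) p) = δ)
      then x ^ (1 + Ch σ p f) else 0

/-- transition coefficient -/
noncomputable def Cc (σ : Equiv.Perm (Fin n)) (x : ℝ) (p : ℕ) (ε' δ' ε δ : Bool) : ℝ :=
  if decide (wv σ ε p < wv σ ε' (p + 1)) = δ' then (if δ = δ' then 1 else x) else 0

lemma Sr_step (σ : Equiv.Perm (Fin n)) (x : ℝ) {p : ℕ} (hp : 1 ≤ p) (hpn : p + 1 ≤ n)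
    (ε' δ' : Bool) :
    Sr σ x (p + 1) ε' δ'
      = 1/2 * (Cc σ x p ε' δ' false false * Sr σ x p false false
        + Cc σ x p ε' δ' false true * Sr σ x p false true
        + Cc σ x p ε' δ' true false * Sr σ x p true false
        + Cc σ x p ε' δ' true true * Sr σ x p true true) := by
  have hkp : p < n := by omega
  set k : Fin n := ⟨p, hkp⟩ with hk
  have hkval : (k : ℕ) = p := by rw [hk]
  set T : Bool → Bool → (Fin n → Bool) → ℝ := fun ε δ f =>
    if (0 < signedWord n (σ, f) 1 ∧ decide (signedWord n (σ, f) p < 0) = ε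
        ∧ decide (signedWord n (σ, f) (p - 1) < signedWord n (σ, f) p) = δ)
      then x ^ (1 + Ch σ p f) else 0 with hT
  have hsplit : ∀ f : Fin n → Bool,
      (if (0 < signedWord n (σ, f) 1 ∧ decide (signedWord n (σ, f) (p + 1) < 0) = ε'
          ∧ decide (signedWord n (σ, f) p < signedWord n (σ, f) (p + 1)) = δ')
        then x ^ (1 + Ch σ (p + 1) f) else 0)
      = Cc σ x p ε' δ' false false * (if f k = ε' then T false false f else 0)
        + Cc σ x p ε' δ' false true * (if f k = ε' then T false true f else 0)
        + Cc σ x p ε' δ' true false * (if f k = ε' then T true false f else 0)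
        + Cc σ x p ε' δ' true true * (if f k = ε' then T true true f else 0) := by
    intro f
    have hc1 : decide (signedWord n (σ, f) (p + 1) < 0) = f k :=
      signedWord_class σ f (by omega) hpn
    by_cases hfk : f k = ε'
    · simp only [if_pos hfk, hc1, hfk, eq_self_iff_true, true_and]
      have hw1 : signedWord n (σ, f) (p + 1) = wv σ ε' (p + 1) := by
        rw [signedWord_eq_wv σ f (by omega) hpn]
        exact congrArg (fun b => wv σ b (p + 1)) hfk
      by_cases h1 : 0 < signedWord n (σ, f) 1
      · simp only [h1, true_and]
        have hTval : ∀ ε δ : Bool, T ε δ f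
            = if (decide (signedWord n (σ, f) p < 0) = ε
                ∧ decide (signedWord n (σ, f) (p - 1) < signedWord n (σ, f) p) = δ)
              then x ^ (1 + Ch σ p f) else 0 := by
          intro ε δ
          rw [hT]
          simp only [h1, true_and]
        have hkey : ∀ (bε bδ : Bool),
            decide (signedWord n (σ, f) p < 0) = bε →
            decide (signedWord n (σ, f) (p - 1) < signedWord n (σ, f) p) = bδ →
            (if decide (signedWord n (σ, f) p < signedWord n (σ, f) (p + 1)) = δ'
              then x ^ (1 + Ch σ (p + 1) f) else 0)
            = Cc σ x p ε' δ' bε bδ * x ^ (1 + Ch σ p f) := by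
          intro bε bδ hε hδ
          have hwp : signedWord n (σ, f) p = wv σ bε p :=
            signedWord_of_class σ f hp (by omega) hε
          rw [Ch_succ σ f hp, change_count σ f hp hpn, hδ, hwp, hw1]
          unfold Cc
          by_cases hD : decide (wv σ bε p < wv σ ε' (p + 1)) = δ'
          · rw [if_pos hD, if_pos hD, hD]
            by_cases hbd : bδ = δ'
            · simp only [if_pos hbd]
              norm_num
            · simp only [if_neg hbd]
              rw [show 1 + (Ch σ p f + 1) = (1 + Ch σ p f) + 1 by omega, pow_succ]
              ring
          · rw [if_neg hD, if_neg hD]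
            simp
        cases hε : decide (signedWord n (σ, f) p < 0) <;>
          cases hδ : decide (signedWord n (σ, f) (p - 1)
            < signedWord n (σ, f) p) <;>
          · rw [hTval false false, hTval false true, hTval true false, hTval true true,
              hε, hδ]
            rw [hkey _ _ hε hδ]
            norm_num
      · rw [if_neg (by tauto)]
        have hTz : ∀ ε δ : Bool, T ε δ f = 0 := by
          intro ε δ
          rw [hT]
          simp only
          rw [if_neg (by tauto)]
        rw [hTz, hTz, hTz, hTz]
        norm_num
    · rw [if_neg (fun hc => hfk (hc1.symm.trans hc.2.1))]
      simp only [if_neg hfk, mul_zero, add_zero]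
  have hhalf : ∀ ε δ : Bool,
      (∑ f : Fin n → Bool, if f k = ε' then T ε δ f else 0) = 1/2 * Sr σ x p ε δ := by
    intro ε δ
    have := half_sum k (T ε δ) (fun f b => by
      rw [hT]
      simp only
      rw [Ch_update σ p f k b (by omega),
        signedWord_update σ f k b (i := 1) (by omega),
        signedWord_update σ f k b (i := p) (by omega),
        signedWord_update σ f k b (i := p - 1) (by omega)]) ε'
    rw [this]
    rfl
  have hmain : Sr σ x (p + 1) ε' δ'
      = ∑ f : Fin n → Bool,
        (Cc σ x p ε' δ' false false * (if f k = ε' then T false false f else 0)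
          + Cc σ x p ε' δ' false true * (if f k = ε' then T false true f else 0)
          + Cc σ x p ε' δ' true false * (if f k = ε' then T true false f else 0)
          + Cc σ x p ε' δ' true true * (if f k = ε' then T true true f else 0)) := by
    unfold Sr
    simp only [Nat.add_sub_cancel]
    exact Finset.sum_congr rfl (fun f _ => hsplit f)
  rw [hmain, Finset.sum_add_distrib, Finset.sum_add_distrib, Finset.sum_add_distrib,
    ← Finset.mul_sum, ← Finset.mul_sum, ← Finset.mul_sum, ← Finset.mul_sum,
    hhalf false false, hhalf false true, hhalf true false, hhalf true true]
  ring

end Rside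

end DB16

namespace DB16

open Finset Function

section RInduction

variable {n : ℕ}

lemma claimR (σ : Equiv.Perm (Fin n)) (x : ℝ) :
    ∀ p, 1 ≤ p → p ≤ n →
      (bt σ p = 0 → Sr σ x p false false = 0 ∧ Sr σ x p true true = 0) ∧
      (bt σ p = 1 → Sr σ x p false true = Sr σ x p true true
        ∧ Sr σ x p false false = Sr σ x p true false) ∧
      (Sr σ x p false false + Sr σ x p false true + Sr σ x p true false
          + Sr σ x p true true
        = 2 ^ (n - p) * (x * ((2*x) ^ lpks σ p * (1 + x) ^ (p - 1 - lpks σ p)))) ∧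
      lpks σ p ≤ p - 1 := by
  intro p
  induction p with
  | zero => omega
  | succ q ih =>
    intro hq1 hqn
    rcases Nat.eq_or_lt_of_le hq1 with hbase | hstep
    · -- base case p = 1
      have hq0 : q = 0 := by omega
      subst hq0
      simp only [Nat.zero_add]
      have hn1 : 1 ≤ n := hqn
      have hk0 : (0:ℕ) < n := hn1
      set k : Fin n := ⟨0, hk0⟩ with hk
      have hA1 := permWord_pos σ (le_refl 1) hn1
      have hzt : ∀ δ : Bool, Sr σ x 1 true δ = 0 := by
        intro δ
        apply Finset.sum_eq_zero
        intro f _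
        rw [if_neg]
        intro hc
        have := hc.1
        have h2 := hc.2.1
        rw [decide_eq_true_eq] at h2
        omega
      have hzf : Sr σ x 1 false false = 0 := by
        apply Finset.sum_eq_zero
        intro f _
        rw [if_neg]
        intro hc
        have h1 := hc.1
        have h2 := hc.2.2
        rw [show (1:ℕ) - 1 = 0 from rfl, signedWord_zero, decide_eq_false_iff_not] at h2
        omega
      have hft : Sr σ x 1 false true = 2 ^ (n-1) * x := by
        unfold Sr
        have hpt : ∀ f : Fin n → Bool,
            (if (0 < signedWord n (σ, f) 1 ∧ decide (signedWord n (σ, f) 1 < 0) = false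
              ∧ decide (signedWord n (σ, f) (1-1) < signedWord n (σ, f) 1) = true)
              then x ^ (1 + Ch σ 1 f) else 0)
            = (if f k = false then x else 0) := by
          intro f
          by_cases h1 : 0 < signedWord n (σ, f) 1
          · rw [if_pos ⟨h1, by rw [decide_eq_false_iff_not]; omega,
              by rw [show (1:ℕ) - 1 = 0 from rfl, signedWord_zero, decide_eq_true_eq]
                 exact h1⟩,
              if_pos ((signedWord_pos_iff σ f (le_refl 1) hn1).mp h1), Ch_one, pow_one]
          · rw [if_neg (fun hc => h1 hc.1), if_neg
              (fun hf => h1 ((signedWord_pos_iff σ f (le_refl 1) hn1).mpr hf))]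
        rw [Finset.sum_congr rfl (fun f _ => hpt f),
          half_sum k (fun _ => x) (fun _ _ => rfl) false, Finset.sum_const,
          Finset.card_univ]
        simp only [Fintype.card_fun, Fintype.card_bool, Fintype.card_fin, nsmul_eq_mul]
        push_cast
        have h2 : (2:ℝ) ^ n = 2 ^ (n - 1) * 2 := by
          rw [← pow_succ]; congr 1; omega
        rw [h2]; ring
      refine ⟨fun _ => ⟨hzf, hzt true⟩,
        fun hcon => absurd hcon (by rw [bt_one σ hn1]; omega), ?_, by rw [lpks_one]⟩
      rw [hzf, hzt true, hzt false, hft, lpks_one]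
      norm_num
    · -- inductive step
      have hq1' : 1 ≤ q := by omega
      have hqn' : q ≤ n := by omega
      obtain ⟨ih0, ih1, ihtot, ihJ⟩ := ih hq1' hqn'
      have hAq := permWord_pos σ hq1' hqn'
      have hAq1 := permWord_pos σ (show 1 ≤ q + 1 by omega) hqn
      have hAne := permWord_ne σ hq1' hqn' (show 1 ≤ q + 1 by omega) hqn (by omega)
      have hs_ff := Sr_step σ x hq1' hqn false false
      have hs_ft := Sr_step σ x hq1' hqn false true
      have hs_tf := Sr_step σ x hq1' hqn true false
      have hs_tt := Sr_step σ x hq1' hqn true true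
      simp only [Cc, wv_false, wv_true] at hs_ff hs_ft hs_tf hs_tt
      have hd01 : decide (permWord n σ q < -permWord n σ (q+1)) = false := by
        rw [decide_eq_false_iff_not]; omega
      have hd10 : decide (-permWord n σ q < permWord n σ (q+1)) = true := by
        rw [decide_eq_true_eq]; omega
      have hlps := lpks_succ σ hq1'
      have hbq10 : permWord n σ (q+1-1) = permWord n σ q := by norm_num
      rcases lt_or_gt_of_ne hAne with hlt | hgt
      · -- ascent
        have hbt1 : bt σ (q + 1) = 0 := by
          unfold bt; rw [hbq10, if_neg (by omega)]
        have hd00 : decide (permWord n σ q < permWord n σ (q+1)) = true := by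
          rw [decide_eq_true_eq]; omega
        have hd11 : decide (-permWord n σ q < -permWord n σ (q+1)) = false := by
          rw [decide_eq_false_iff_not]; omega
        simp only [hd00, hd01, hd10, hd11] at hs_ff hs_ft hs_tf hs_tt
        norm_num at hs_ff hs_ft hs_tf hs_tt
        have hJ : lpks σ (q+1) = lpks σ q := by
          rw [hlps, if_neg (by omega), add_zero]
        refine ⟨fun _ => ⟨by rw [hs_ff], by rw [hs_tt]⟩,
          fun hcon => absurd hcon (by omega), ?_, by omega⟩
        rw [hs_ff, hs_ft, hs_tf, hs_tt, hJ]
        have e1 : n - q = (n - (q + 1)) + 1 := by omega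
        have e2 : q + 1 - 1 - lpks σ q = (q - 1 - lpks σ q) + 1 := by omega
        rw [e2, pow_succ]
        rw [e1, pow_succ] at ihtot
        linear_combination ((1+x)/2) * ihtot
      · -- descent
        have hbt1 : bt σ (q + 1) = 1 := by
          unfold bt; rw [hbq10, if_pos (by omega)]
        have hd00 : decide (permWord n σ q < permWord n σ (q+1)) = false := by
          rw [decide_eq_false_iff_not]; omega
        have hd11 : decide (-permWord n σ q < -permWord n σ (q+1)) = true := by
          rw [decide_eq_true_eq]; omega
        simp only [hd00, hd01, hd10, hd11] at hs_ff hs_ft hs_tf hs_tt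
        norm_num at hs_ff hs_ft hs_tf hs_tt
        refine ⟨fun hcon => absurd hcon (by omega),
          fun _ => ⟨by rw [hs_ft, hs_tt], by rw [hs_ff, hs_tf]⟩, ?_, ?_⟩
        · rcases bt_zero_or_one σ q with hb0 | hb1
          · -- peak at q
            obtain ⟨hz1, hz2⟩ := ih0 hb0
            have hJ : lpks σ (q+1) = lpks σ q + 1 := by
              rw [hlps, if_pos ⟨(bt_zero_iff σ hq1' hqn').mp hb0, by omega⟩]
            rw [hs_ff, hs_ft, hs_tf, hs_tt, hJ, hz1, hz2]
            have e1 : n - q = (n - (q + 1)) + 1 := by omega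
            have e2 : q + 1 - 1 - (lpks σ q + 1) = q - 1 - lpks σ q := by omega
            rw [e2, pow_succ]
            rw [e1, pow_succ, hz1, hz2] at ihtot
            linear_combination x * ihtot
          · obtain ⟨he1, he2⟩ := ih1 hb1
            have hJ : lpks σ (q+1) = lpks σ q := by
              rw [hlps, if_neg (by
                intro hc
                have := (bt_zero_iff σ hq1' hqn').mpr hc.1
                omega), add_zero]
            rw [hs_ff, hs_ft, hs_tf, hs_tt, hJ]
            have e1 : n - q = (n - (q + 1)) + 1 := by omega
            have e2 : q + 1 - 1 - lpks σ q = (q - 1 - lpks σ q) + 1 := by omega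
            rw [e2, pow_succ]
            rw [e1, pow_succ, he1, he2] at ihtot
            rw [he1, he2]
            linear_combination ((1+x)/2) * ihtot
        · rcases bt_zero_or_one σ q with hb0 | hb1
          · have hJ : lpks σ (q+1) = lpks σ q + 1 := by
              rw [hlps, if_pos ⟨(bt_zero_iff σ hq1' hqn').mp hb0, by omega⟩]
            omega
          · have hJ : lpks σ (q+1) = lpks σ q := by
              rw [hlps, if_neg (by
                intro hc
                have := (bt_zero_iff σ hq1' hqn').mpr hc.1
                omega), add_zero]
            omega

lemma fiberR (hn : 1 ≤ n) (σ : Equiv.Perm (Fin n)) (x : ℝ) :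
    (∑ f : Fin n → Bool, if 0 < signedWord n (σ, f) 1 then x ^ runB n (σ, f) else 0)
      = x * ((2*x) ^ (leftPeakSet n σ).card
          * (1+x) ^ (n - 1 - (leftPeakSet n σ).card)) := by
  obtain ⟨_, _, htot, hJ⟩ := claimR σ x n hn (le_refl n)
  have hsum : (∑ f : Fin n → Bool, if 0 < signedWord n (σ, f) 1
        then x ^ runB n (σ, f) else 0)
      = Sr σ x n false false + Sr σ x n false true + Sr σ x n true false
        + Sr σ x n true true := by
    unfold Sr
    rw [← Finset.sum_add_distrib, ← Finset.sum_add_distrib, ← Finset.sum_add_distrib]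
    apply Finset.sum_congr rfl
    intro f _
    rw [← Ch_n]
    by_cases h1 : 0 < signedWord n (σ, f) 1
    · cases hε : decide (signedWord n (σ, f) n < 0) <;>
        cases hδ : decide (signedWord n (σ, f) (n-1) < signedWord n (σ, f) n) <;>
        simp [h1, hε, hδ]
    · simp [h1]
  rw [hsum, htot, ← lpks_n, Nat.sub_self, pow_zero, one_mul]

end RInduction

end DB16

/-- Type B David–Barton: For `n ≥ 1` and real `−1 < x ≤ 1`, with
`w = √((1−x)/(1+x))`,
`R_n^{B,>}(x) = (x/2) ((1+x)/2)^{n−1} (1+w)^n B_n((1−w)/(1+w))`. -/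
theorem statement16 (n : ℕ) (hn : 1 ≤ n) (x : ℝ) (hx1 : -1 < x) (hx2 : x ≤ 1) :
    runPolyBgtReal n x =
      x / 2 * ((1 + x) / 2) ^ (n - 1) * (1 + Real.sqrt ((1 - x) / (1 + x))) ^ n *
        eulerianBReal n
          ((1 - Real.sqrt ((1 - x) / (1 + x))) / (1 + Real.sqrt ((1 - x) / (1 + x)))) := by
  have h1x : (0:ℝ) < 1 + x := by linarith
  have h1xne : (1:ℝ) + x ≠ 0 := ne_of_gt h1x
  have hfrac : (0:ℝ) ≤ (1 - x) / (1 + x) := div_nonneg (by linarith) (le_of_lt h1x)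
  set W := Real.sqrt ((1 - x) / (1 + x)) with hWdef
  have hW0 : 0 ≤ W := Real.sqrt_nonneg _
  have hW2 : W ^ 2 = (1 - x) / (1 + x) := Real.sq_sqrt hfrac
  have h1W : (0:ℝ) < 1 + W := by linarith
  have hWne : (1:ℝ) + W ≠ 0 := ne_of_gt h1W
  set u := (1 - W) / (1 + W) with hu
  have h1u : 1 + u = 2 / (1 + W) := by
    rw [hu]; field_simp; ring
  have h4u : (4:ℝ) * u = (1 - W ^ 2) * (1 + u) ^ 2 := by
    rw [h1u, hu]; field_simp; ring
  have hkey : 1 - W ^ 2 = 2 * x / (1 + x) := by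
    rw [hW2]; field_simp; ring
  have hLHS : runPolyBgtReal n x = ∑ σ : Equiv.Perm (Fin n),
      x * ((2 * x) ^ (leftPeakSet n σ).card
        * (1 + x) ^ (n - 1 - (leftPeakSet n σ).card)) := by
    unfold runPolyBgtReal
    rw [Fintype.sum_prod_type]
    exact Finset.sum_congr rfl (fun σ _ => DB16.fiberR hn σ x)
  have hRHS : eulerianBReal n u = ∑ σ : Equiv.Perm (Fin n),
      4 ^ (leftPeakSet n σ).card * u ^ (leftPeakSet n σ).card
        * (1 + u) ^ (n - 2 * (leftPeakSet n σ).card) := by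
    unfold eulerianBReal
    rw [Fintype.sum_prod_type]
    exact Finset.sum_congr rfl (fun σ _ => DB16.fiberD hn σ u)
  rw [hLHS, hRHS, Finset.mul_sum]
  apply Finset.sum_congr rfl
  intro σ _
  obtain ⟨hJn, hJ1⟩ := DB16.lpk_le hn σ
  set J := (leftPeakSet n σ).card with hJdef
  have hA : (4:ℝ) ^ J * u ^ J * (1 + u) ^ (n - 2 * J)
      = (2 * x / (1 + x)) ^ J * (2 / (1 + W)) ^ n := by
    rw [← mul_pow, h4u, mul_pow, ← pow_mul, mul_assoc, ← pow_add,
      show 2 * J + (n - 2 * J) = n by omega, hkey, h1u]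
  have hsplit1x : ((1:ℝ) + x) ^ (n - 1) = (1 + x) ^ (n - 1 - J) * (1 + x) ^ J := by
    rw [← pow_add]; congr 1; omega
  have h2n : (2:ℝ) ^ n = 2 ^ (n - 1) * 2 := by
    rw [← pow_succ]; congr 1; omega
  have hgoal : x / 2 * ((1 + x) / 2) ^ (n - 1) * (1 + W) ^ n
        * (4 ^ J * u ^ J * (1 + u) ^ (n - 2 * J))
      = x * ((2 * x) ^ J * (1 + x) ^ (n - 1 - J)) := by
    rw [hA, div_pow, div_pow, div_pow, hsplit1x, h2n]
    have hp1 : ((1:ℝ) + W) ^ n ≠ 0 := pow_ne_zero _ hWne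
    have hp2 : ((1:ℝ) + x) ^ J ≠ 0 := pow_ne_zero _ h1xne
    have hp3 : (2:ℝ) ^ (n - 1) ≠ 0 := pow_ne_zero _ two_ne_zero
    field_simp
  rw [← hgoal]
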